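/- In the FBD-α process, for all k ≥ 1 and t ≥ 0: M_{2k}(t+1) − M_{2k}(t) = Σ_{i=1}^k C(2k, 2k−2i)·M^ν_{2k−2i}(t), where M_{2k}(t) = Σ_x x^{2k} μ_t(x) and M^ν_j(t) = Σ_x x^j ν_t(x). -/

import Mathlib

/-!
Since `μ_{t+1} = (ν_t(· - 1) + ν_t(· + 1)) / 2 + f_t` and `μ_t = ν_t + f_t`, the frozen mass
cancels and, after shifting the summation index, `∑ g μ_{t+1} - ∑ g μ_t = ∑ (Δg) ν_t` for every
weight `g`, where `Δg(x) = (g(x + 1) + g(x - 1)) / 2 - g(x)`; all sums are finite since supports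
stay finite. For `g(x) = x^{2k}` the binomial theorem gives
`Δg(x) = ∑_{i=1}^k C(2k, 2k-2i) x^{2k-2i}`, the odd powers cancelling between `(x + 1)^{2k}` and
`(x - 1)^{2k}`.
-/

open Real

/-- The mass of `μ` on the half-line `[x, ∞)`. -/
noncomputable def tailMass (μ : ℤ → ℝ) (x : ℤ) : ℝ := ∑' y : {y : ℤ // x ≤ y}, μ y

/-- The boundary `β = sup {x : μ([x,∞)) ≥ α/2}`. -/
noncomputable def bdry (α : ℝ) (μ : ℤ → ℝ) : ℤ := sSup {x : ℤ | α / 2 ≤ tailMass μ x}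

/-- The frozen mass: the extreme `α/2` mass on each side of the origin. -/
noncomputable def frozen (α : ℝ) (μ : ℤ → ℝ) : ℤ → ℝ := fun y =>
  let b := bdry α μ
  let v : ℤ → ℝ := fun w =>
    if b < w then μ w
    else if w = b then α / 2 - ∑' z : {z : ℤ // b < z}, μ z
    else 0
  if 0 ≤ y then v y else v (-y)

/-- The free mass `ν = μ - f`. -/
noncomputable def free (α : ℝ) (μ : ℤ → ℝ) : ℤ → ℝ := fun x => μ x - frozen α μ x

/-- One step of the Frozen-Boundary Diffusion:
`μ_{t+1}(x) = (ν_t(x-1) + ν_t(x+1))/2 + f_t(x)`. -/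
noncomputable def FBDstep (α : ℝ) (μ : ℤ → ℝ) : ℤ → ℝ := fun x =>
  (free α μ (x - 1) + free α μ (x + 1)) / 2 + frozen α μ x

/-- The Frozen-Boundary Diffusion with parameter `α`, started from `μ_0 = δ_0`. -/
noncomputable def FBD (α : ℝ) : ℕ → ℤ → ℝ
  | 0 => fun x => if x = 0 then 1 else 0
  | t + 1 => FBDstep α (FBD α t)

open Finset

namespace Function.HasFiniteSupport

variable {α : ℝ} {μ : ℤ → ℝ}

theorem frozen (hμ : μ.HasFiniteSupport) : (frozen α μ).HasFiniteSupport := by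
  set S := μ.support ∪ {bdry α μ}
  have hS : S.Finite := hμ.union (Set.finite_singleton _)
  refine (hS.union (hS.preimage neg_injective.injOn)).subset fun y hy => ?_
  simp only [mem_support, _root_.frozen] at hy
  split_ifs at hy <;> simp_all [S]; omega

theorem free (hμ : μ.HasFiniteSupport) : (free α μ).HasFiniteSupport :=
  hμ.sub hμ.frozen

theorem FBDstep (hμ : μ.HasFiniteSupport) : (FBDstep α μ).HasFiniteSupport := by
  have hν := hμ.free (α := α)
  have hleft := hν.comp_of_injective (sub_left_injective (b := (1 : ℤ)))
  have hright := hν.comp_of_injective (add_left_injective (1 : ℤ))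
  exact ((hleft.add hright).fun_comp (g := (· / 2)) (zero_div 2)).add hμ.frozen

end Function.HasFiniteSupport

theorem FBD_hasFiniteSupport (α : ℝ) (t : ℕ) : (FBD α t).HasFiniteSupport := by
  induction t with
  | zero => exact (Set.finite_singleton 0).subset fun x hx => by simpa [FBD] using hx
  | succ t ih => exact ih.FBDstep

theorem Finset.sum_range_two_mul_add_one_of_odd_eq_zero {M : Type*} [AddCommMonoid M] {f : ℕ → M}
    (hf : ∀ m, Odd m → f m = 0) (n : ℕ) :
    ∑ m ∈ range (2 * n + 1), f m = ∑ i ∈ range (n + 1), f (2 * i) := by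
  rw [← sum_image fun a _ b _ h => (mul_right_injective₀ two_ne_zero h : a = b)]
  refine (sum_subset (fun m => by simp; omega) fun m hm hnot => hf m ?_).symm
  obtain ⟨j, rfl | rfl⟩ := Nat.even_or_odd' m
  · simp only [mem_range, mem_image, not_exists, not_and] at hm hnot
    exact absurd rfl (hnot j (by omega))
  · exact odd_two_mul_add_one j

theorem add_one_pow_add_sub_one_pow_two_mul {R : Type*} [CommRing R] (x : R) (k : ℕ) :
    (x + 1) ^ (2 * k) + (x - 1) ^ (2 * k) =
      2 * (x ^ (2 * k) +
        ∑ i ∈ Icc 1 k, ((2 * k).choose (2 * k - 2 * i) : R) * x ^ (2 * k - 2 * i)) := by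
  have expand : (x + 1) ^ (2 * k) + (x - 1) ^ (2 * k) = ∑ m ∈ range (2 * k + 1),
      (1 + (-1) ^ m) * (((2 * k).choose m : R) * x ^ (2 * k - m)) := by
    rw [add_comm x, sub_eq_neg_add, add_pow, add_pow, ← sum_add_distrib]
    exact sum_congr rfl fun m _ => by simp only [one_pow]; ring
  rw [expand, sum_range_two_mul_add_one_of_odd_eq_zero (fun m hm => by simp [hm.neg_one_pow]),
    range_eq_Ico, Ico_add_one_right_eq_Icc, ← insert_Icc_add_one_left_eq_Icc k.zero_le,
    sum_insert (by simp), mul_add, mul_sum]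
  congr 1
  · norm_num
  · refine sum_congr (by rw [zero_add]) fun i hi => ?_
    rw [Nat.choose_symm (by simp at hi; omega), pow_mul, neg_one_sq, one_pow, one_add_one_eq_two]

theorem summable_mul_of_hasFiniteSupport {ι R : Type*} [NonUnitalNonAssocSemiring R]
    [TopologicalSpace R] {h : ι → R} (hh : h.HasFiniteSupport) (φ : ι → R) :
    Summable fun x => φ x * h x :=
  summable_of_hasFiniteSupport (hh.fun_mul_right φ)

theorem tsum_mul_FBDstep_sub_tsum_mul {α : ℝ} {μ : ℤ → ℝ} (hμ : μ.HasFiniteSupport) (g : ℤ → ℝ) :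
    ∑' x, g x * FBDstep α μ x - ∑' x, g x * μ x =
      ∑' x, ((g (x + 1) + g (x - 1)) / 2 - g x) * free α μ x := by
  set ν := free α μ
  have hν : ν.HasFiniteSupport := hμ.free
  have summable (φ : ℤ → ℝ) := summable_mul_of_hasFiniteSupport hν φ
  have shift_left : ∑' x, g x * ν (x - 1) = ∑' x, g (x + 1) * ν x := by
    rw [← (Equiv.addRight 1).tsum_eq]; simp
  have shift_right : ∑' x, g x * ν (x + 1) = ∑' x, g (x - 1) * ν x := by
    rw [← (Equiv.subRight 1).tsum_eq]; simp
  have step : ∑' x, g x * FBDstep α μ x =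
      (∑' x, g x * ν (x - 1) + ∑' x, g x * ν (x + 1)) / 2 + ∑' x, g x * frozen α μ x := by
    have left : Summable fun x => g x * ν (x - 1) :=
      summable_mul_of_hasFiniteSupport (hν.comp_of_injective sub_left_injective) g
    have right : Summable fun x => g x * ν (x + 1) :=
      summable_mul_of_hasFiniteSupport (hν.comp_of_injective (add_left_injective 1)) g
    rw [← left.tsum_add right, ← tsum_div_const,
      ← ((left.add right).div_const 2).tsum_add (summable_mul_of_hasFiniteSupport hμ.frozen g)]
    exact tsum_congr fun x => by simp only [FBDstep]; ring
  have split : ∑' x, g x * μ x = ∑' x, g x * ν x + ∑' x, g x * frozen α μ x := by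
    rw [← (summable g).tsum_add (summable_mul_of_hasFiniteSupport hμ.frozen g)]
    exact tsum_congr fun x => by simp only [ν, free]; ring
  have laplacian : ∑' x, ((g (x + 1) + g (x - 1)) / 2 - g x) * ν x =
      (∑' x, g (x + 1) * ν x + ∑' x, g (x - 1) * ν x) / 2 - ∑' x, g x * ν x := by
    rw [← (summable _).tsum_add (summable _), ← tsum_div_const,
      ← (((summable _).add (summable _)).div_const 2).tsum_sub (summable g)]
    exact tsum_congr fun x => by ring
  rw [step, split, shift_left, shift_right, laplacian]
  ring

theorem stmt16_general (α : ℝ) (k : ℕ) (t : ℕ) :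
    (∑' x : ℤ, (x : ℝ) ^ (2 * k) * FBD α (t + 1) x) - ∑' x : ℤ, (x : ℝ) ^ (2 * k) * FBD α t x =
      ∑ i ∈ Icc 1 k, (Nat.choose (2 * k) (2 * k - 2 * i) : ℝ) *
        ∑' x : ℤ, (x : ℝ) ^ (2 * k - 2 * i) * free α (FBD α t) x := by
  have hμ := FBD_hasFiniteSupport α t
  have second_difference (x : ℤ) :
      (((x + 1 : ℤ) : ℝ) ^ (2 * k) + ((x - 1 : ℤ) : ℝ) ^ (2 * k)) / 2 - (x : ℝ) ^ (2 * k) =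
        ∑ i ∈ Icc 1 k, ((2 * k).choose (2 * k - 2 * i) : ℝ) * (x : ℝ) ^ (2 * k - 2 * i) := by
    push_cast
    rw [add_one_pow_add_sub_one_pow_two_mul]
    ring
  rw [FBD, tsum_mul_FBDstep_sub_tsum_mul hμ]
  simp_rw [second_difference, sum_mul]
  rw [Summable.tsum_finsetSum fun i _ => summable_mul_of_hasFiniteSupport hμ.free _]
  simp_rw [mul_assoc, tsum_mul_left]

/-- Moment evolution in the FBD-α process:
`M_{2k}(t+1) - M_{2k}(t) = ∑_{i=1}^k C(2k, 2k-2i) M^ν_{2k-2i}(t)`. -/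
theorem stmt16 (α : ℝ) (hα : α ∈ Set.Ioo (0:ℝ) 1) (k : ℕ) (hk : 1 ≤ k) (t : ℕ) :
    (∑' x : ℤ, (x : ℝ) ^ (2 * k) * FBD α (t + 1) x) - ∑' x : ℤ, (x : ℝ) ^ (2 * k) * FBD α t x =
      ∑ i ∈ Icc 1 k, (Nat.choose (2 * k) (2 * k - 2 * i) : ℝ) *
        ∑' x : ℤ, (x : ℝ) ^ (2 * k - 2 * i) * free α (FBD α t) x :=
  stmt16_general α k t
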